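/- arXiv:2306.12256 — 4 statements merged into one kernel-verified Lean document; each statement's English description precedes it below -/
import Mathlib

section
/- Let f : ℝ × ℝⁿ → ℝⁿ be continuous, twice continuously differentiable in x, with D_x f and D_x² f bounded uniformly in t on a neighborhood of a bounded solution X : [0,∞) → ℝⁿ of ẋ = f(t,x). If there exist K, λ > 0 such that every solution v of the linearized system v̇ = D_x f(t, X(t)) v satisfies ‖v(t)‖ ≤ K ‖v(t₀)‖ e^{−λ(t−t₀)} for all t ≥ t₀ ≥ 0, then X is locally exponentially stable. -/
/-!
Let `A t = D_x f (t, X t)`. In the tube of radius `r` around `X`, the bounds on `D_x f` and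
`D_x² f` make `f t` `M`-Lipschitz and give the Taylor estimate
`‖f t (X t + h) - f t (X t) - A t h‖ ≤ M ‖h‖²`. Fix a period `T` with `K e^{-λT} ≤ 1/4`. If the
error `e = x - X` is small at time `s`, Grönwall keeps it in the tube over `[s, s + T]` with
`‖e t‖ ≤ e^{MT} ‖e s‖`, and comparing `e` with the solution `v` of the linearized system with
`v s = e s` gives `‖e (s + T) - v (s + T)‖ = O(‖e s‖²)`; hence `‖e (s + T)‖ ≤ ‖e s‖ / 2` once
`‖e s‖` is small enough. Iterating over periods gives exponential decay with rate `log 2 / T`.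

The hypothesis on the linearized system is only usable once it has solutions on `[s, ∞)`. They
exist because `A` is bounded and, as a uniform limit of difference quotients, strongly
continuous: Picard–Lindelöf then solves on intervals of a fixed length, and these local
solutions are glued end to end.
-/

open Set Metric Filter Topology Real
open scoped NNReal

theorem forall_mem_Icc_lt_of_forall_Ico_lt {u : ℝ → ℝ} {a b R : ℝ} (hu : ContinuousOn u (Icc a b))
    (h : ∀ t ∈ Icc a b, (∀ τ ∈ Ico a t, u τ < R) → u t < R) : ∀ t ∈ Icc a b, u t < R := by
  by_contra! hbad
  set S := Icc a b ∩ u ⁻¹' Ici R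
  have hS : IsClosed S := hu.preimage_isClosed_of_isClosed isClosed_Icc isClosed_Ici
  have hSne : S.Nonempty := hbad
  have hSbdd : BddBelow S := ⟨a, fun t ht => ht.1.1⟩
  obtain ⟨hmem, hle⟩ := hS.csInf_mem hSne hSbdd
  refine (h _ hmem fun τ hτ => ?_).not_ge hle
  by_contra! hτR
  exact hτ.2.not_ge (csInf_le hSbdd ⟨⟨hτ.1, hτ.2.le.trans hmem.2⟩, hτR⟩)

theorem gronwallBound_zero_le {K ε x : ℝ} (hK : 0 ≤ K) (hε : 0 ≤ ε) :
    gronwallBound 0 K ε x ≤ ε * x * exp (K * x) := by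
  rcases hK.eq_or_lt with rfl | hK
  · simp [gronwallBound_K0]
  -- `exp y - 1 ≤ y * exp y` is `1 - y ≤ exp (-y)` multiplied by `exp y`
  have key : exp (K * x) - 1 ≤ K * x * exp (K * x) := by
    have : exp (K * x) * exp (-(K * x)) = 1 := by rw [← exp_add, add_neg_cancel, exp_zero]
    nlinarith [add_one_le_exp (-(K * x)), exp_pos (K * x)]
  simp only [gronwallBound_of_K_ne_0 hK.ne', zero_mul, zero_add]
  rw [div_mul_eq_mul_div, div_le_iff₀ hK]
  nlinarith

theorem le_mul_exp_of_forall_le_half {u : ℝ → ℝ} {t₀ T δ C : ℝ} (hT : 0 < T) (hC : 0 ≤ C)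
    (hu : ∀ t, 0 ≤ u t)
    (hstep : ∀ s ≥ t₀, u s ≤ δ → (∀ t ∈ Icc s (s + T), u t ≤ C * u s) ∧ u (s + T) ≤ u s / 2)
    (h₀ : u t₀ ≤ δ) : ∀ t ≥ t₀, u t ≤ 2 * C * u t₀ * exp (-(log 2 / T) * (t - t₀)) := by
  have hsmall : ∀ k : ℕ, u t₀ / 2 ^ k ≤ δ := fun k =>
    (div_le_self (hu t₀) (one_le_pow₀ one_le_two)).trans h₀
  have hk : ∀ k : ℕ, u (t₀ + k * T) ≤ u t₀ / 2 ^ k := by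
    intro k
    induction k with
    | zero => simp
    | succ k ih =>
      have hs : t₀ ≤ t₀ + k * T := le_add_of_nonneg_right (by positivity)
      calc u (t₀ + (k + 1 : ℕ) * T) = u (t₀ + k * T + T) := by push_cast; ring_nf
        _ ≤ u (t₀ + k * T) / 2 := (hstep _ hs (ih.trans (hsmall k))).2
        _ ≤ u t₀ / 2 ^ (k + 1) := by rw [pow_succ, ← div_div]; gcongr
  intro t ht
  set k := ⌊(t - t₀) / T⌋₊
  have hkt : t₀ + k * T ≤ t := by
    have := Nat.floor_le (div_nonneg (sub_nonneg.2 ht) hT.le)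
    rw [le_div_iff₀ hT] at this
    linarith
  have htk : t ≤ t₀ + k * T + T := by
    have := Nat.lt_floor_add_one ((t - t₀) / T)
    rw [div_lt_iff₀ hT] at this
    linarith
  have hs : t₀ ≤ t₀ + k * T := le_add_of_nonneg_right (by positivity)
  have hexp : (2 : ℝ)⁻¹ ^ (k + 1) ≤ exp (-(log 2 / T) * (t - t₀)) := by
    calc (2 : ℝ)⁻¹ ^ (k + 1) = exp (-(log 2 / T) * ((k + 1 : ℕ) * T)) := by
          rw [show -(log 2 / T) * ((k + 1 : ℕ) * T) = -((k + 1 : ℕ) * log 2) by field_simp,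
            exp_neg, exp_nat_mul, exp_log two_pos, inv_pow]
      _ ≤ exp (-(log 2 / T) * (t - t₀)) := by
          gcongr exp ?_
          have : 0 ≤ log 2 / T := div_nonneg (log_nonneg one_le_two) hT.le
          push_cast
          nlinarith
  calc u t ≤ C * u (t₀ + k * T) :=
        (hstep _ hs ((hk k).trans (hsmall k))).1 t ⟨hkt, htk⟩
    _ ≤ C * (u t₀ / 2 ^ k) := by gcongr; exact hk k
    _ = 2 * C * u t₀ * (2 : ℝ)⁻¹ ^ (k + 1) := by rw [inv_pow, pow_succ]; field_simp
    _ ≤ 2 * C * u t₀ * exp (-(log 2 / T) * (t - t₀)) := by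
      gcongr; exact mul_nonneg (mul_nonneg two_pos.le hC) (hu t₀)

theorem Nat.ceil_eq_of_sub_one_lt_of_le {x : ℝ} {k : ℕ} (h₁ : (k : ℝ) - 1 < x) (h₂ : x ≤ k) :
    ⌈x⌉₊ = k := by
  refine le_antisymm (Nat.ceil_le.2 h₂) ?_
  rcases k with _ | m
  · exact Nat.zero_le _
  · exact Nat.lt_ceil.2 (by push_cast at h₁; linarith)

variable {E F : Type*} [NormedAddCommGroup E] [NormedSpace ℝ E]
  [NormedAddCommGroup F] [NormedSpace ℝ F]

theorem norm_image_add_sub_sub_fderiv_le {g : E → F} (hg : ContDiff ℝ 2 g) {x h : E} {r M : ℝ}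
    (hM : ∀ y ∈ ball x r, ‖fderiv ℝ (fderiv ℝ g) y‖ ≤ M) (hh : ‖h‖ < r) :
    ‖g (x + h) - g x - fderiv ℝ g x h‖ ≤ M * ‖h‖ ^ 2 := by
  have hsub : closedBall x ‖h‖ ⊆ ball x r := closedBall_subset_ball hh
  have hM0 : 0 ≤ M := (norm_nonneg (fderiv ℝ (fderiv ℝ g) x)).trans
    (hM x (hsub (mem_closedBall_self (norm_nonneg h))))
  have hdiff : Differentiable ℝ (fderiv ℝ g) :=
    (hg.fderiv_right (m := 1) le_rfl).differentiable one_ne_zero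
  have hD : ∀ y ∈ closedBall x ‖h‖, ‖fderiv ℝ g y - fderiv ℝ g x‖ ≤ M * ‖h‖ := fun y hy =>
    calc ‖fderiv ℝ g y - fderiv ℝ g x‖ ≤ M * ‖y - x‖ :=
          (convex_ball x r).norm_image_sub_le_of_norm_fderiv_le (fun z _ => hdiff z) hM
            (mem_ball_self ((norm_nonneg h).trans_lt hh)) (hsub hy)
      _ ≤ M * ‖h‖ := by gcongr; exact mem_closedBall_iff_norm.mp hy
  have := (convex_closedBall x ‖h‖).norm_image_sub_le_of_norm_fderiv_le'
    (fun z _ => hg.differentiable two_ne_zero z) hD (mem_closedBall_self (norm_nonneg h))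
    (by simp : x + h ∈ closedBall x ‖h‖)
  simpa [sq, mul_assoc] using this

theorem continuousOn_apply_of_norm_sub_sub_le {f : ℝ → E → F} {X : ℝ → E} {D : ℝ → E →L[ℝ] F}
    {s : Set ℝ} {r M : ℝ} (hr : 0 < r) (hf : Continuous (Function.uncurry f))
    (hX : ContinuousOn X s)
    (hD : ∀ t ∈ s, ∀ h : E, ‖h‖ < r → ‖f t (X t + h) - f t (X t) - D t h‖ ≤ M * ‖h‖ ^ 2)
    (w : E) : ContinuousOn (fun t => D t w) s := by
  set q : ℝ → ℝ → F := fun ε t => ε⁻¹ • (f t (X t + ε • w) - f t (X t))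
  have hq : ∀ ε, ContinuousOn (q ε) s := fun ε =>
    ((hf.comp_continuousOn (continuousOn_id.prodMk (hX.add continuousOn_const))).sub
      (hf.comp_continuousOn (continuousOn_id.prodMk hX))).const_smul _
  have hbound : ∀ ε > 0, ε * ‖w‖ < r → ∀ t ∈ s, ‖D t w - q ε t‖ ≤ M * ‖w‖ ^ 2 * ε := by
    intro ε hε hεr t ht
    have := hD t ht (ε • w) (by rwa [norm_smul, norm_of_nonneg hε.le])
    have heq : D t w - q ε t = ε⁻¹ • (D t (ε • w) - (f t (X t + ε • w) - f t (X t))) := by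
      simp only [q, map_smul, smul_sub, inv_smul_smul₀ hε.ne']
    rw [heq, norm_smul, norm_inv, norm_of_nonneg hε.le, norm_sub_rev]
    rw [norm_smul, norm_of_nonneg hε.le] at this
    calc ε⁻¹ * ‖_‖ ≤ ε⁻¹ * (M * (ε * ‖w‖) ^ 2) := by gcongr
      _ = M * ‖w‖ ^ 2 * ε := by field_simp
  have hlim : Tendsto (fun ε => (ε * ‖w‖, M * ‖w‖ ^ 2 * ε)) (𝓝[>] 0) (𝓝 (0, 0)) := by
    refine tendsto_nhdsWithin_of_tendsto_nhds (Continuous.tendsto' ?_ _ _ (by simp))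
    fun_prop
  refine TendstoUniformlyOn.continuousOn (p := 𝓝[>] 0) ?_ (Eventually.of_forall hq).frequently
  rw [Metric.tendstoUniformlyOn_iff]
  intro η hη
  filter_upwards [self_mem_nhdsWithin,
    hlim.eventually (prod_mem_nhds (gt_mem_nhds hr) (gt_mem_nhds hη))] with ε hε hε' t ht
  rw [dist_eq_norm]
  exact (hbound ε hε hε'.1 t ht).trans_lt hε'.2

theorem hasDerivAt_ceil_glue {V : ℝ → E → E} {β : ℕ → ℝ → E} {s τ t : ℝ} (hτ : 0 < τ)
    (hβ : ∀ k : ℕ, ∀ u ∈ Icc (s + k * τ - τ) (s + k * τ),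
      HasDerivWithinAt (β k) (V u (β k u)) (Icc (s + k * τ - τ) (s + k * τ)) u)
    (hjoin : ∀ k : ℕ, β (k + 1) (s + k * τ) = β k (s + k * τ)) (ht : s ≤ t) :
    HasDerivAt (fun u => β ⌈(u - s) / τ⌉₊ u) (V t (β ⌈(t - s) / τ⌉₊ t)) t := by
  set v : ℝ → E := fun u => β ⌈(u - s) / τ⌉₊ u
  have hsucc : ∀ k : ℕ, s + (k + 1 : ℕ) * τ = s + k * τ + τ := fun k => by push_cast; ring
  have hv : ∀ k : ℕ, EqOn v (β k) (Ioc (s + k * τ - τ) (s + k * τ)) := fun k u hu => by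
    have hk : ⌈(u - s) / τ⌉₊ = k := Nat.ceil_eq_of_sub_one_lt_of_le
      (by rw [lt_div_iff₀ hτ]; linarith [hu.1]) (by rw [div_le_iff₀ hτ]; linarith [hu.2])
    simp only [v, hk]
  have hv' : ∀ k : ℕ, EqOn v (β (k + 1)) (Icc (s + k * τ) (s + k * τ + τ)) := by
    intro k u hu
    rcases hu.1.eq_or_lt with rfl | hlt
    · rw [hjoin, hv k ⟨by linarith, le_rfl⟩]
    · exact hv (k + 1) ⟨by rw [hsucc]; linarith, by rw [hsucc]; exact hu.2⟩
  set k := ⌈(t - s) / τ⌉₊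
  have htk : t ∈ Ioc (s + k * τ - τ) (s + k * τ) := by
    have hlt := Nat.ceil_lt_add_one (div_nonneg (sub_nonneg.2 ht) hτ.le)
    have hle := Nat.le_ceil ((t - s) / τ)
    rw [← sub_lt_iff_lt_add, lt_div_iff₀ hτ] at hlt
    rw [div_le_iff₀ hτ] at hle
    constructor <;> linarith
  have hleft : HasDerivWithinAt v (V t (v t)) (Ioc (s + k * τ - τ) (s + k * τ)) t := by
    rw [hv k htk]
    exact ((hβ k t (Ioc_subset_Icc_self htk)).mono Ioc_subset_Icc_self).congr (hv k) (hv k htk)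
  have hright : HasDerivWithinAt v (V t (v t)) (Icc (s + k * τ) (s + k * τ + τ)) t := by
    rcases htk.2.eq_or_lt with heq | hlt
    · have hmem : t ∈ Icc (s + k * τ) (s + k * τ + τ) := ⟨heq.ge, by linarith⟩
      have h := hβ (k + 1) t (by rw [hsucc, add_sub_cancel_right]; exact hmem)
      rw [hsucc, add_sub_cancel_right] at h
      rw [hv' k hmem]
      exact h.congr (hv' k) (hv' k hmem)
    · exact HasFDerivWithinAt.of_notMem_closure
        (by rw [closure_Icc]; exact fun h => hlt.not_ge h.1)
  have h := hleft.union hright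
  rw [Ioc_union_Icc_eq_Ioc (by linarith) (by linarith)] at h
  exact h.hasDerivAt (Ioc_mem_nhds htk.1 (by linarith [htk.2]))

theorem exists_forall_hasDerivAt_of_forall_exists_Icc {V : ℝ → E → E} {τ : ℝ} (hτ : 0 < τ)
    (hloc : ∀ (a : ℝ) (x : E), ∃ g : ℝ → E, g a = x ∧
      ∀ t ∈ Icc (a - τ) (a + τ), HasDerivWithinAt g (V t (g t)) (Icc (a - τ) (a + τ)) t)
    (s : ℝ) (x₀ : E) : ∃ v : ℝ → E, v s = x₀ ∧ ∀ t ≥ s, HasDerivAt v (V t (v t)) t := by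
  choose g hg₀ hg using hloc
  let β : ℕ → ℝ → E := fun k => Nat.rec (g s x₀) (fun k βk => g (s + k * τ) (βk (s + k * τ))) k
  have hβ : ∀ k : ℕ, ∀ u ∈ Icc (s + k * τ - τ) (s + k * τ),
      HasDerivWithinAt (β k) (V u (β k u)) (Icc (s + k * τ - τ) (s + k * τ)) u := by
    rintro (_ | k) u hu
    · have hsub : Icc (s - τ) s ⊆ Icc (s - τ) (s + τ) := Icc_subset_Icc_right (by linarith)
      simp only [CharP.cast_eq_zero, zero_mul, add_zero] at hu ⊢
      exact (hg s x₀ u (hsub hu)).mono hsub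
    · have hsub : Icc (s + (k + 1 : ℕ) * τ - τ) (s + (k + 1 : ℕ) * τ) ⊆
          Icc (s + k * τ - τ) (s + k * τ + τ) :=
        Icc_subset_Icc (by push_cast; linarith) (by push_cast; linarith)
      exact (hg _ _ u (hsub hu)).mono hsub
  exact ⟨_, by simpa [β] using hg₀ s x₀,
    fun t ht => hasDerivAt_ceil_glue hτ hβ (fun k => hg₀ _ _) ht⟩

theorem exists_hasDerivWithinAt_clm_apply_Icc [CompleteSpace E] {A : ℝ → E →L[ℝ] E} {M : ℝ≥0}
    (hA : ∀ t, ‖A t‖ ≤ M) (hAc : ∀ w, Continuous fun t => A t w) (a : ℝ) (x : E) :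
    ∃ g : ℝ → E, g a = x ∧ ∀ t ∈ Icc (a - (2 * M + 1)⁻¹) (a + (2 * M + 1)⁻¹),
      HasDerivWithinAt g (A t (g t)) (Icc (a - (2 * M + 1)⁻¹) (a + (2 * M + 1)⁻¹)) t := by
  set τ : ℝ := (2 * M + 1)⁻¹
  have hτ : 0 < τ := by positivity
  have hτM : 2 * M * τ ≤ 1 := by
    rw [mul_inv_le_iff₀ (by positivity)]; linarith
  -- on `closedBall x ‖x‖` the field is bounded by `2 M ‖x‖`, and it is `M`-Lipschitz
  have hpl : IsPicardLindelof (fun t y => A t y) (tmin := a - τ) (tmax := a + τ)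
      ⟨a, by linarith, by linarith⟩ x ‖x‖₊ 0 (2 * M * ‖x‖₊) M := by
    refine ⟨fun t _ => ((A t).lipschitz.weaken (hA t)).lipschitzOnWith,
      fun y _ => (hAc y).continuousOn, ?_, ?_⟩
    · intro t _ y hy
      have hy' : ‖y‖ ≤ 2 * ‖x‖ := by
        have := norm_le_norm_add_norm_sub' y x
        rw [mem_closedBall_iff_norm, coe_nnnorm] at hy
        linarith
      calc ‖A t y‖ ≤ M * ‖y‖ := (A t).le_of_opNorm_le (hA t) y
        _ ≤ M * (2 * ‖x‖) := by gcongr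
        _ = _ := by push_cast; ring
    · simp only [add_sub_cancel_left, sub_sub_cancel, max_self, NNReal.coe_mul, coe_nnnorm,
        NNReal.coe_ofNat, NNReal.coe_zero, sub_zero]
      calc 2 * M * ‖x‖ * τ = (2 * M * τ) * ‖x‖ := by ring
        _ ≤ 1 * ‖x‖ := by gcongr
        _ = ‖x‖ := one_mul _
  exact hpl.exists_eq_forall_mem_Icc_hasDerivWithinAt (mem_closedBall_self le_rfl)

theorem exists_hasDerivAt_clm_apply_of_nonneg [CompleteSpace E] {A : ℝ → E →L[ℝ] E} {M : ℝ≥0}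
    (hA : ∀ t ≥ 0, ‖A t‖ ≤ M) (hAc : ∀ w, ContinuousOn (fun t => A t w) (Ici 0)) {s : ℝ}
    (hs : 0 ≤ s) (x₀ : E) : ∃ v : ℝ → E, v s = x₀ ∧ ∀ t ≥ s, HasDerivAt v (A t (v t)) t := by
  -- extend `A` to negative times by freezing it at `t = 0`
  obtain ⟨v, hv₀, hv⟩ := exists_forall_hasDerivAt_of_forall_exists_Icc (by positivity)
    (exists_hasDerivWithinAt_clm_apply_Icc (A := fun t => A (max t 0))
      (fun t => hA _ (le_max_right t 0))
      (fun w => (hAc w).comp_continuous (continuous_id.max continuous_const)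
        (fun t => le_max_right t 0))) s x₀
  exact ⟨v, hv₀, fun t ht => by simpa only [max_eq_left (hs.trans ht)] using hv t ht⟩

section Tube

variable {f : ℝ → E → E} {X x : ℝ → E} {r M s T : ℝ}

theorem norm_sub_le_mul_exp_of_lipschitz_tube (hM : 0 ≤ M) (hs : 0 ≤ s)
    (hlip : ∀ t ≥ 0, ∀ y ∈ ball (X t) r, ‖f t y - f t (X t)‖ ≤ M * ‖y - X t‖)
    (hX : ∀ t ≥ s, HasDerivAt X (f t (X t)) t) (hx : ∀ t ≥ s, HasDerivAt x (f t (x t)) t)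
    (hsmall : ‖x s - X s‖ * exp (M * T) < r) :
    ∀ t ∈ Icc s (s + T), ‖x t - X t‖ ≤ ‖x s - X s‖ * exp (M * (t - s)) := by
  have he : ∀ t ≥ s, HasDerivAt (fun u => x u - X u) (f t (x t) - f t (X t)) t :=
    fun t ht => (hx t ht).sub (hX t ht)
  have hcont : ContinuousOn (fun u => x u - X u) (Icc s (s + T)) :=
    fun t ht => (he t ht.1).continuousAt.continuousWithinAt
  have hgron : ∀ t ∈ Icc s (s + T), (∀ u ∈ Ico s t, ‖x u - X u‖ < r) →
      ‖x t - X t‖ ≤ ‖x s - X s‖ * exp (M * (t - s)) := by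
    intro t ht htube
    have := norm_le_gronwallBound_of_norm_deriv_right_le (K := M) (ε := 0)
      (hcont.mono (Icc_subset_Icc_right ht.2)) (fun u hu => (he u hu.1).hasDerivWithinAt) le_rfl
      (fun u hu => ?_) t ⟨ht.1, le_rfl⟩
    · rwa [gronwallBound_ε0] at this
    rw [add_zero]
    exact hlip u (hs.trans hu.1) (x u) (mem_ball_iff_norm.2 (htube u hu))
  have htube : ∀ t ∈ Icc s (s + T), ‖x t - X t‖ < r := by
    refine forall_mem_Icc_lt_of_forall_Ico_lt (continuous_norm.comp_continuousOn hcont)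
      fun t ht htube => (hgron t ht htube).trans_lt (lt_of_le_of_lt ?_ hsmall)
    gcongr
    linarith [ht.2]
  exact fun t ht => hgron t ht fun u hu => htube u ⟨hu.1, hu.2.le.trans ht.2⟩

theorem norm_sub_sub_le_of_taylor_tube {A : ℝ → E →L[ℝ] E} {v : ℝ → E} (hM : 0 ≤ M) (hs : 0 ≤ s)
    (hT : 0 ≤ T)
    (htaylor : ∀ t ≥ 0, ∀ h : E, ‖h‖ < r → ‖f t (X t + h) - f t (X t) - A t h‖ ≤ M * ‖h‖ ^ 2)
    (hA : ∀ t ≥ 0, ‖A t‖ ≤ M)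
    (hX : ∀ t ≥ s, HasDerivAt X (f t (X t)) t) (hx : ∀ t ≥ s, HasDerivAt x (f t (x t)) t)
    (hv : ∀ t ≥ s, HasDerivAt v (A t (v t)) t) (hv₀ : v s = x s - X s)
    (hsmall : ‖x s - X s‖ * exp (M * T) < r)
    (hgrowth : ∀ t ∈ Icc s (s + T), ‖x t - X t‖ ≤ ‖x s - X s‖ * exp (M * T)) :
    ‖x (s + T) - X (s + T) - v (s + T)‖ ≤ M * T * exp (3 * (M * T)) * ‖x s - X s‖ ^ 2 := by
  set ε := M * (‖x s - X s‖ * exp (M * T)) ^ 2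
  have hw : ∀ t ≥ s, HasDerivAt (fun u => x u - X u - v u)
      (f t (x t) - f t (X t) - A t (v t)) t :=
    fun t ht => ((hx t ht).sub (hX t ht)).sub (hv t ht)
  -- `w = x - X - v` solves `w' = A w + (f(x) - f(X) - A (x - X))`, with a quadratic forcing term
  have hbound : ∀ t ∈ Ico s (s + T),
      ‖f t (x t) - f t (X t) - A t (v t)‖ ≤ M * ‖x t - X t - v t‖ + ε := by
    intro t ht
    have hsplit : f t (x t) - f t (X t) - A t (v t) =
        A t (x t - X t - v t) + (f t (X t + (x t - X t)) - f t (X t) - A t (x t - X t)) := by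
      rw [add_sub_cancel, map_sub, map_sub]; abel
    have hgrow := hgrowth t (Ico_subset_Icc_self ht)
    rw [hsplit]
    refine (norm_add_le _ _).trans (add_le_add ((A t).le_of_opNorm_le (hA t (hs.trans ht.1)) _) ?_)
    calc _ ≤ M * ‖x t - X t‖ ^ 2 := htaylor t (hs.trans ht.1) _ (hgrow.trans_lt hsmall)
      _ ≤ ε := mul_le_mul_of_nonneg_left (pow_le_pow_left₀ (norm_nonneg _) hgrow 2) hM
  have := norm_le_gronwallBound_of_norm_deriv_right_le (δ := 0)
    (fun t ht => (hw t ht.1).continuousAt.continuousWithinAt)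
    (fun t ht => (hw t ht.1).hasDerivWithinAt) (by simp [hv₀]) hbound (s + T)
    ⟨by linarith, le_rfl⟩
  calc _ ≤ gronwallBound 0 M ε T := by rwa [add_sub_cancel_left] at this
    _ ≤ ε * T * exp (M * T) := gronwallBound_zero_le hM (mul_nonneg hM (sq_nonneg _))
    _ = M * T * exp (3 * (M * T)) * ‖x s - X s‖ ^ 2 := by
      rw [show 3 * (M * T) = M * T + M * T + M * T by ring, exp_add, exp_add]; ring

end Tube

theorem exists_forall_norm_sub_le_half {f : ℝ → E → E} {X : ℝ → E} {A : ℝ → E →L[ℝ] E}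
    {r M K lam : ℝ} (hr : 0 < r) (hM : 0 ≤ M) (hlam : 0 < lam)
    (hX : ∀ t ≥ 0, HasDerivAt X (f t (X t)) t)
    (hlip : ∀ t ≥ 0, ∀ y ∈ ball (X t) r, ‖f t y - f t (X t)‖ ≤ M * ‖y - X t‖)
    (htaylor : ∀ t ≥ 0, ∀ h : E, ‖h‖ < r → ‖f t (X t + h) - f t (X t) - A t h‖ ≤ M * ‖h‖ ^ 2)
    (hA : ∀ t ≥ 0, ‖A t‖ ≤ M)
    (hsol : ∀ s ≥ 0, ∀ v₀ : E, ∃ v : ℝ → E, v s = v₀ ∧ ∀ t ≥ s, HasDerivAt v (A t (v t)) t)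
    (hlin : ∀ s ≥ 0, ∀ v : ℝ → E, (∀ t ≥ s, HasDerivAt v (A t (v t)) t) →
      ∀ t ≥ s, ‖v t‖ ≤ K * ‖v s‖ * exp (-lam * (t - s))) :
    ∃ T > 0, ∃ δ > 0, ∀ s ≥ 0, ∀ x : ℝ → E, (∀ t ≥ s, HasDerivAt x (f t (x t)) t) →
      ‖x s - X s‖ ≤ δ → (∀ t ∈ Icc s (s + T), ‖x t - X t‖ ≤ exp (M * T) * ‖x s - X s‖) ∧
        ‖x (s + T) - X (s + T)‖ ≤ ‖x s - X s‖ / 2 := by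
  obtain ⟨T, hKT, hT⟩ : ∃ T, K * exp (-lam * T) ≤ 1 / 4 ∧ 0 < T := by
    have : Tendsto (fun T => K * exp (-lam * T)) atTop (𝓝 0) := by
      simpa [neg_mul] using
        (tendsto_exp_neg_atTop_nhds_zero.comp (tendsto_id.const_mul_atTop hlam)).const_mul K
    exact ((this.eventually (ge_mem_nhds (by norm_num))).and (eventually_gt_atTop 0)).exists
  set C := M * T * exp (3 * (M * T))
  obtain ⟨δ, ⟨hδr, hδC⟩, hδ⟩ : ∃ δ, (δ * exp (M * T) < r ∧ C * δ ≤ 1 / 4) ∧ 0 < δ := by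
    have : ∀ᶠ δ in 𝓝 (0 : ℝ), δ * exp (M * T) < r ∧ C * δ ≤ 1 / 4 :=
      ((Continuous.tendsto' (by fun_prop) 0 0 (by simp)).eventually (gt_mem_nhds hr)).and
        ((Continuous.tendsto' (by fun_prop) 0 0 (by simp)).eventually (ge_mem_nhds (by norm_num)))
    exact ((this.filter_mono (nhdsWithin_le_nhds (s := Ioi 0))).and self_mem_nhdsWithin).exists
  refine ⟨T, hT, δ, hδ, fun s hs x hx hxs => ?_⟩
  have hX' : ∀ t ≥ s, HasDerivAt X (f t (X t)) t := fun t ht => hX t (hs.trans ht)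
  have hsmall : ‖x s - X s‖ * exp (M * T) < r := lt_of_le_of_lt (by gcongr) hδr
  have hgrowth : ∀ t ∈ Icc s (s + T), ‖x t - X t‖ ≤ ‖x s - X s‖ * exp (M * T) := fun t ht =>
    (norm_sub_le_mul_exp_of_lipschitz_tube hM hs hlip hX' hx hsmall t ht).trans
      (by gcongr; linarith [ht.2])
  refine ⟨fun t ht => (hgrowth t ht).trans_eq (mul_comm _ _), ?_⟩
  obtain ⟨v, hv₀, hv⟩ := hsol s hs (x s - X s)
  have hvT : ‖v (s + T)‖ ≤ K * exp (-lam * T) * ‖x s - X s‖ := by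
    have := hlin s hs v hv (s + T) (by linarith)
    rwa [add_sub_cancel_left, mul_right_comm, hv₀] at this
  have hwT := norm_sub_sub_le_of_taylor_tube hM hs hT.le htaylor hA hX' hx hv hv₀ hsmall hgrowth
  have hCx : C * ‖x s - X s‖ ≤ 1 / 4 := (mul_le_mul_of_nonneg_left hxs (by positivity)).trans hδC
  calc ‖x (s + T) - X (s + T)‖
      ≤ ‖v (s + T)‖ + ‖x (s + T) - X (s + T) - v (s + T)‖ := norm_le_norm_add_norm_sub' _ _
    _ ≤ K * exp (-lam * T) * ‖x s - X s‖ + C * ‖x s - X s‖ * ‖x s - X s‖ := by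
      rw [mul_assoc C, ← sq]; exact add_le_add hvT hwT
    _ ≤ 1 / 4 * ‖x s - X s‖ + 1 / 4 * ‖x s - X s‖ := by gcongr
    _ = ‖x s - X s‖ / 2 := by ring

theorem linearized_exp_stable_implies_les_general
    (n : ℕ) (f : ℝ → EuclideanSpace ℝ (Fin n) → EuclideanSpace ℝ (Fin n))
    (hf_cont : Continuous (Function.uncurry f))
    (hf_diff : ∀ t : ℝ, ContDiff ℝ 2 (f t))
    (X : ℝ → EuclideanSpace ℝ (Fin n))
    (hX : ∀ t ≥ (0 : ℝ), HasDerivAt X (f t (X t)) t)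
    -- `D_x f` and `D_x² f` are bounded uniformly in `t` on a neighborhood of `X`
    (hbdd : ∃ r > (0 : ℝ), ∃ M : ℝ, ∀ t ≥ (0 : ℝ),
      ∀ y : EuclideanSpace ℝ (Fin n), (∃ s ≥ (0 : ℝ), ‖y - X s‖ < r) →
        ‖fderiv ℝ (f t) y‖ ≤ M ∧ ‖fderiv ℝ (fderiv ℝ (f t)) y‖ ≤ M)
    (K lam : ℝ) (hlam : 0 < lam)
    -- every solution of the linearized system `v̇ = D_x f(t, X(t)) v` decays exponentially
    (hlin : ∀ t₀ ≥ (0 : ℝ), ∀ v : ℝ → EuclideanSpace ℝ (Fin n),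
      (∀ t ≥ t₀, HasDerivAt v (fderiv ℝ (f t) (X t) (v t)) t) →
      ∀ t ≥ t₀, ‖v t‖ ≤ K * ‖v t₀‖ * Real.exp (-lam * (t - t₀))) :
    -- conclusion: `X` is locally exponentially stable
    ∃ c > (0 : ℝ), ∃ K' > (0 : ℝ), ∃ lam' > (0 : ℝ),
      ∀ t₀ ≥ (0 : ℝ), ∀ x : ℝ → EuclideanSpace ℝ (Fin n),
        (∀ t ≥ t₀, HasDerivAt x (f t (x t)) t) →
        ‖x t₀ - X t₀‖ < c →
        ∀ t ≥ t₀, ‖x t - X t‖ ≤ K' * ‖x t₀ - X t₀‖ * Real.exp (-lam' * (t - t₀)) := by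
  obtain ⟨r, hr, M₀, hM₀⟩ := hbdd
  set M := max M₀ 0
  have hM : 0 ≤ M := le_max_right _ _
  have hball : ∀ t ≥ (0 : ℝ), ∀ y ∈ ball (X t) r,
      ‖fderiv ℝ (f t) y‖ ≤ M ∧ ‖fderiv ℝ (fderiv ℝ (f t)) y‖ ≤ M := fun t ht y hy =>
    have h := hM₀ t ht y ⟨t, ht, mem_ball_iff_norm.1 hy⟩
    ⟨h.1.trans (le_max_left _ _), h.2.trans (le_max_left _ _)⟩
  have hlip : ∀ t ≥ (0 : ℝ), ∀ y ∈ ball (X t) r, ‖f t y - f t (X t)‖ ≤ M * ‖y - X t‖ :=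
    fun t ht y hy => (convex_ball _ _).norm_image_sub_le_of_norm_fderiv_le
      (fun z _ => (hf_diff t).differentiable two_ne_zero z) (fun z hz => (hball t ht z hz).1)
      (mem_ball_self hr) hy
  have htaylor : ∀ t ≥ (0 : ℝ), ∀ h, ‖h‖ < r →
      ‖f t (X t + h) - f t (X t) - fderiv ℝ (f t) (X t) h‖ ≤ M * ‖h‖ ^ 2 := fun t ht h hh =>
    norm_image_add_sub_sub_fderiv_le (hf_diff t) (fun y hy => (hball t ht y hy).2) hh
  have hA : ∀ t ≥ (0 : ℝ), ‖fderiv ℝ (f t) (X t)‖ ≤ M := fun t ht =>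
    (hball t ht (X t) (mem_ball_self hr)).1
  have hsol := fun s (hs : 0 ≤ s) => exists_hasDerivAt_clm_apply_of_nonneg (M := ⟨M, hM⟩) hA
    (continuousOn_apply_of_norm_sub_sub_le hr hf_cont
      (fun t ht => (hX t ht).continuousAt.continuousWithinAt) htaylor) hs
  obtain ⟨T, hT, δ, hδ, hstep⟩ :=
    exists_forall_norm_sub_le_half hr hM hlam hX hlip htaylor hA hsol hlin
  refine ⟨δ, hδ, 2 * exp (M * T), by positivity, log 2 / T, by positivity,
    fun t₀ ht₀ x hx hx₀ => ?_⟩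
  simpa only [mul_assoc] using le_mul_exp_of_forall_le_half hT (exp_pos _).le
    (fun _ => norm_nonneg _)
    (fun s hs hsδ => hstep s (ht₀.trans hs) x (fun t ht => hx t (hs.trans ht)) hsδ) hx₀.le

/-- Euclidean instantiation of the converse direction of Theorem 1:
if the linearized system along a bounded solution `X` of `ẋ = f(t,x)` is uniformly
exponentially stable, then `X` is locally exponentially stable. -/
theorem linearized_exp_stable_implies_les
    (n : ℕ) (f : ℝ → EuclideanSpace ℝ (Fin n) → EuclideanSpace ℝ (Fin n))
    (hf_cont : Continuous (Function.uncurry f))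
    (hf_diff : ∀ t : ℝ, ContDiff ℝ 2 (f t))
    (X : ℝ → EuclideanSpace ℝ (Fin n))
    (hX : ∀ t ≥ (0 : ℝ), HasDerivAt X (f t (X t)) t)
    -- `X` is bounded
    (hXbdd : ∃ B : ℝ, ∀ t ≥ (0 : ℝ), ‖X t‖ ≤ B)
    -- `D_x f` and `D_x² f` are bounded uniformly in `t` on a neighborhood of `X`
    (hbdd : ∃ r > (0 : ℝ), ∃ M : ℝ, ∀ t ≥ (0 : ℝ),
      ∀ y : EuclideanSpace ℝ (Fin n), (∃ s ≥ (0 : ℝ), ‖y - X s‖ < r) →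
        ‖fderiv ℝ (f t) y‖ ≤ M ∧ ‖fderiv ℝ (fderiv ℝ (f t)) y‖ ≤ M)
    (K lam : ℝ) (hK : 0 < K) (hlam : 0 < lam)
    -- every solution of the linearized system `v̇ = D_x f(t, X(t)) v` decays exponentially
    (hlin : ∀ t₀ ≥ (0 : ℝ), ∀ v : ℝ → EuclideanSpace ℝ (Fin n),
      (∀ t ≥ t₀, HasDerivAt v (fderiv ℝ (f t) (X t) (v t)) t) →
      ∀ t ≥ t₀, ‖v t‖ ≤ K * ‖v t₀‖ * Real.exp (-lam * (t - t₀))) :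
    -- conclusion: `X` is locally exponentially stable
    ∃ c > (0 : ℝ), ∃ K' > (0 : ℝ), ∃ lam' > (0 : ℝ),
      ∀ t₀ ≥ (0 : ℝ), ∀ x : ℝ → EuclideanSpace ℝ (Fin n),
        (∀ t ≥ t₀, HasDerivAt x (f t (x t)) t) →
        ‖x t₀ - X t₀‖ < c →
        ∀ t ≥ t₀, ‖x t - X t‖ ≤ K' * ‖x t₀ - X t₀‖ * Real.exp (-lam' * (t - t₀)) :=
  linearized_exp_stable_implies_les_general n f hf_cont hf_diff X hX hbdd K lam hlam hlin
end

section
/- Let f : ℝⁿ → ℝⁿ be continuously differentiable and let X : [0,∞) → ℝⁿ be a solution of the autonomous system ẋ = f(x) that is locally exponentially stable with constants c, K, λ. Then ‖Ẋ(t)‖ ≤ K ‖Ẋ(0)‖ e^{−λ t} for all t ≥ 0, and consequently X is bounded: ‖X(t)‖ ≤ ‖X(0)‖ + K ‖f(X(0))‖ / λ for all t ≥ 0. -/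
open Filter Topology Set

/-- Euclidean instantiation of (part of) Corollary 1: a locally
exponentially stable solution `X` of an autonomous system `ẋ = f(x)` satisfies
`‖Ẋ(t)‖ = ‖f(X(t))‖ ≤ K ‖f(X(0))‖ e^{-λ t}` and hence is bounded:
`‖X(t)‖ ≤ ‖X(0)‖ + K ‖f(X(0))‖ / λ`. -/
theorem les_autonomous_solution_velocity_decay_and_bounded
    (n : ℕ) (f : EuclideanSpace ℝ (Fin n) → EuclideanSpace ℝ (Fin n))
    (hf : ContDiff ℝ 1 f)
    (X : ℝ → EuclideanSpace ℝ (Fin n))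
    (hX : ∀ t ≥ (0 : ℝ), HasDerivAt X (f (X t)) t)
    (c K lam : ℝ) (hc : 0 < c) (hK : 0 < K) (hlam : 0 < lam)
    -- `X` is locally exponentially stable with constants `c, K, λ`
    (hLES : ∀ t₀ ≥ (0 : ℝ), ∀ x : ℝ → EuclideanSpace ℝ (Fin n),
      (∀ t ≥ t₀, HasDerivAt x (f (x t)) t) →
      ‖x t₀ - X t₀‖ < c →
      ∀ t ≥ t₀, ‖x t - X t‖ ≤ K * ‖x t₀ - X t₀‖ * Real.exp (-lam * (t - t₀))) :
    (∀ t ≥ (0 : ℝ), ‖f (X t)‖ ≤ K * ‖f (X 0)‖ * Real.exp (-lam * t)) ∧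
    (∀ t ≥ (0 : ℝ), ‖X t‖ ≤ ‖X 0‖ + K * ‖f (X 0)‖ / lam) := by
  -- Part 1: velocity decay
  have part1 : ∀ t ≥ (0 : ℝ), ‖f (X t)‖ ≤ K * ‖f (X 0)‖ * Real.exp (-lam * t) := by
    intro t ht
    -- key inequality for small s > 0 with ‖X s - X 0‖ < c
    have key : ∀ s > (0 : ℝ), ‖X s - X 0‖ < c →
        ‖X (t + s) - X t‖ ≤ K * ‖X s - X 0‖ * Real.exp (-lam * t) := by
      intro s hs hsc
      have hx : ∀ u ≥ (0 : ℝ), HasDerivAt (fun u => X (u + s)) (f (X (u + s))) u := by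
        intro u hu
        have h1 : HasDerivAt X (f (X (u + s))) (u + s) :=
          hX (u + s) (by linarith)
        have h2 : HasDerivAt (fun u : ℝ => u + s) 1 u := (hasDerivAt_id u).add_const s
        simpa [Function.comp_def] using h1.scomp u h2
      have := hLES 0 le_rfl (fun u => X (u + s)) hx (by simpa using hsc) t ht
      simpa using this
    -- eventual inequality on slopes
    have hXc : ContinuousAt X 0 := (hX 0 le_rfl).continuousAt
    have hev : ∀ᶠ s in 𝓝[>] (0 : ℝ),
        ‖slope X t (t + s)‖ ≤ K * ‖slope X 0 s‖ * Real.exp (-lam * t) := by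
      have hsmall : ∀ᶠ s in 𝓝 (0 : ℝ), ‖X s - X 0‖ < c := by
        have : Tendsto (fun s => ‖X s - X 0‖) (𝓝 0) (𝓝 ‖X 0 - X 0‖) :=
          ((hXc.tendsto.sub tendsto_const_nhds).norm)
        simp only [sub_self, norm_zero] at this
        exact this.eventually_lt tendsto_const_nhds hc
      filter_upwards [nhdsWithin_le_nhds hsmall, self_mem_nhdsWithin] with s hsc hs
      have hs : (0 : ℝ) < s := hs
      have hkey := key s hs hsc
      have e1 : ‖slope X t (t + s)‖ = s⁻¹ * ‖X (t + s) - X t‖ := by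
        have hts : (t + s) - t = s := by ring
        rw [slope_def_module, hts, norm_smul, Real.norm_eq_abs, abs_inv, abs_of_pos hs]
      have e2 : ‖slope X 0 s‖ = s⁻¹ * ‖X s - X 0‖ := by
        have hts : s - 0 = s := by ring
        rw [slope_def_module, hts, norm_smul, Real.norm_eq_abs, abs_inv, abs_of_pos hs]
      rw [e1, e2]
      have hinv : (0 : ℝ) ≤ s⁻¹ := le_of_lt (inv_pos.2 hs)
      calc s⁻¹ * ‖X (t + s) - X t‖
          ≤ s⁻¹ * (K * ‖X s - X 0‖ * Real.exp (-lam * t)) :=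
            mul_le_mul_of_nonneg_left hkey hinv
        _ = K * (s⁻¹ * ‖X s - X 0‖) * Real.exp (-lam * t) := by ring
    -- limits
    have hmap : Tendsto (fun s : ℝ => t + s) (𝓝[>] (0 : ℝ)) (𝓝[>] t) := by
      apply Tendsto.inf
      · simpa using (tendsto_const_nhds.add tendsto_id : Tendsto (fun s : ℝ => t + s) (𝓝 0) (𝓝 (t + 0)))
      · rw [tendsto_principal_principal]
        intro s hs; exact by simpa using lt_add_of_pos_right t hs
    have hslope1 : Tendsto (fun s => ‖slope X t (t + s)‖) (𝓝[>] (0 : ℝ)) (𝓝 ‖f (X t)‖) := by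
      have h1 : Tendsto (slope X t) (𝓝[≠] t) (𝓝 (f (X t))) :=
        hasDerivAt_iff_tendsto_slope.1 (hX t ht)
      have h2 : Tendsto (fun s : ℝ => t + s) (𝓝[>] (0 : ℝ)) (𝓝[≠] t) :=
        hmap.mono_right (nhdsWithin_mono t fun x hx => ne_of_gt hx)
      exact (continuous_norm.continuousAt.tendsto.comp (h1.comp h2))
    have hslope2 : Tendsto (fun s => K * ‖slope X 0 s‖ * Real.exp (-lam * t))
        (𝓝[>] (0 : ℝ)) (𝓝 (K * ‖f (X 0)‖ * Real.exp (-lam * t))) := by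
      have h1 : Tendsto (slope X 0) (𝓝[≠] (0 : ℝ)) (𝓝 (f (X 0))) :=
        hasDerivAt_iff_tendsto_slope.1 (hX 0 le_rfl)
      have h2 : Tendsto (slope X 0) (𝓝[>] (0 : ℝ)) (𝓝 (f (X 0))) :=
        h1.mono_left (nhdsWithin_mono 0 fun x hx => ne_of_gt hx)
      exact ((tendsto_const_nhds.mul h2.norm).mul tendsto_const_nhds)
    exact le_of_tendsto_of_tendsto hslope1 hslope2 hev
  refine ⟨part1, fun t ht => ?_⟩
  -- Part 2: boundedness via fencing
  set M := K * ‖f (X 0)‖ with hM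
  have hM0 : 0 ≤ M := mul_nonneg hK.le (norm_nonneg _)
  set B : ℝ → ℝ := fun s => M / lam * (1 - Real.exp (-lam * s)) with hBdef
  have hB' : ∀ s : ℝ, HasDerivAt B (M * Real.exp (-lam * s)) s := by
    intro s
    have h1 : HasDerivAt (fun s : ℝ => Real.exp (-lam * s)) (Real.exp (-lam * s) * -lam) s := by
      have := ((hasDerivAt_id s).const_mul (-lam)).exp
      simpa [mul_comm] using this
    have h2 : HasDerivAt (fun s : ℝ => 1 - Real.exp (-lam * s))
        (0 - Real.exp (-lam * s) * -lam) s := (hasDerivAt_const s 1).sub h1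
    have h3 := h2.const_mul (M / lam)
    refine h3.congr_deriv ?_
    rw [show (0:ℝ) - Real.exp (-lam * s) * -lam = lam * Real.exp (-lam * s) by ring, ← mul_assoc,
      div_mul_cancel₀ _ hlam.ne']
  have hXt : ‖X t - X 0‖ ≤ B t := by
    have := image_norm_le_of_norm_deriv_right_le_deriv_boundary
      (f := fun s => X s - X 0) (f' := fun s => f (X s)) (a := 0) (b := t)
      (fun s hs => ((hX s hs.1).continuousAt.continuousWithinAt.sub
        continuousWithinAt_const))
      (fun s hs => (((hX s hs.1).sub_const (X 0)).hasDerivWithinAt))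
      (by simp [hBdef]) hB'
      (fun s hs => part1 s hs.1)
      (show t ∈ Icc 0 t from ⟨ht, le_rfl⟩)
    exact this
  have hBle : B t ≤ M / lam := by
    have h1 : 0 ≤ Real.exp (-lam * t) := (Real.exp_pos _).le
    have h2 : (1 : ℝ) - Real.exp (-lam * t) ≤ 1 := by linarith
    calc B t = M / lam * (1 - Real.exp (-lam * t)) := rfl
      _ ≤ M / lam * 1 := mul_le_mul_of_nonneg_left h2 (div_nonneg hM0 hlam.le)
      _ = M / lam := mul_one _
  calc ‖X t‖ = ‖X 0 + (X t - X 0)‖ := by congr 1; abel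
    _ ≤ ‖X 0‖ + ‖X t - X 0‖ := norm_add_le _ _
    _ ≤ ‖X 0‖ + M / lam := by linarith [hXt.trans hBle]
end

section
/- Let f : ℝ × ℝⁿ → ℝⁿ be continuous, twice continuously differentiable in x, with D_x f and D_x² f bounded uniformly in t on a neighborhood of a bounded solution q : [0,∞) → ℝⁿ of ẋ = f(t,x). If there is k > 0 such that ⟨D_x f(t, q(t)) v, v⟩ ≤ −k ‖v‖² for all v ∈ ℝⁿ and all t ≥ 0, then the solution q is locally exponentially stable. -/
open scoped RealInnerProductSpace
open Set Real

set_option maxHeartbeats 1000000 in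
/-- Euclidean instantiation of Theorem 2: if
`⟨D_x f(t,q(t)) v, v⟩ ≤ -k ‖v‖²` for all `v` along a bounded solution `q`
(with suitable regularity and uniform bounds on derivatives of `f` near `q`),
then the solution `q` is locally exponentially stable. -/
theorem contraction_condition_implies_les
    (n : ℕ) (f : ℝ → EuclideanSpace ℝ (Fin n) → EuclideanSpace ℝ (Fin n))
    (hf_cont : Continuous (Function.uncurry f))
    (hf_diff : ∀ t : ℝ, ContDiff ℝ 2 (f t))
    (q : ℝ → EuclideanSpace ℝ (Fin n))
    (hq : ∀ t ≥ (0 : ℝ), HasDerivAt q (f t (q t)) t)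
    -- `q` is bounded
    (hqbdd : ∃ B : ℝ, ∀ t ≥ (0 : ℝ), ‖q t‖ ≤ B)
    -- `D_x f` and `D_x² f` are bounded uniformly in `t` on a neighborhood of `q`
    (hbdd : ∃ r > (0 : ℝ), ∃ M : ℝ, ∀ t ≥ (0 : ℝ),
      ∀ y : EuclideanSpace ℝ (Fin n), (∃ s ≥ (0 : ℝ), ‖y - q s‖ < r) →
        ‖fderiv ℝ (f t) y‖ ≤ M ∧ ‖fderiv ℝ (fderiv ℝ (f t)) y‖ ≤ M)
    (k : ℝ) (hk : 0 < k)
    -- the Demidovich/contraction condition along `q`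
    (hcontr : ∀ t ≥ (0 : ℝ), ∀ v : EuclideanSpace ℝ (Fin n),
      ⟪fderiv ℝ (f t) (q t) v, v⟫ ≤ -k * ‖v‖ ^ 2) :
    -- conclusion: `q` is locally exponentially stable
    ∃ c > (0 : ℝ), ∃ K > (0 : ℝ), ∃ lam > (0 : ℝ),
      ∀ t₀ ≥ (0 : ℝ), ∀ x : ℝ → EuclideanSpace ℝ (Fin n),
        (∀ t ≥ t₀, HasDerivAt x (f t (x t)) t) →
        ‖x t₀ - q t₀‖ < c →
        ∀ t ≥ t₀, ‖x t - q t‖ ≤ K * ‖x t₀ - q t₀‖ * Real.exp (-lam * (t - t₀)) := by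
  obtain ⟨r, hr, M, hM⟩ := hbdd
  have hM0 : 0 ≤ M :=
    le_trans (norm_nonneg _) ((hM 0 le_rfl (q 0) ⟨0, le_rfl, by simpa using hr⟩).1)
  set ρ : ℝ := min (r / 2) (k / (2 * (M + 1))) with hρdef
  have hρpos : 0 < ρ := lt_min (by linarith) (by positivity)
  have hρr : ρ < r := lt_of_le_of_lt (min_le_left _ _) (by linarith)
  have hρk : M * ρ ≤ k / 2 := by
    have h1 : ρ ≤ k / (2 * (M + 1)) := min_le_right _ _
    have h2 : M * ρ ≤ M * (k / (2 * (M + 1))) := mul_le_mul_of_nonneg_left h1 hM0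
    have h3 : M * (k / (2 * (M + 1))) ≤ k / 2 := by
      rw [mul_div_assoc', div_le_div_iff₀ (by positivity) (by norm_num : (0:ℝ) < 2)]
      nlinarith
    linarith
  -- differentiability of the Jacobian
  have hFdiff : ∀ t : ℝ, Differentiable ℝ (fderiv ℝ (f t)) := fun t =>
    ((hf_diff t).fderiv_right (m := 1) (by norm_num)).differentiable one_ne_zero
  refine ⟨ρ / 2, by positivity, 1, one_pos, k / 2, by positivity, ?_⟩
  intro t₀ ht₀ x hx hx0 t ht
  set e : ℝ → EuclideanSpace ℝ (Fin n) := fun s => x s - q s with he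
  set g : ℝ → ℝ := fun s => ⟪e s, e s⟫ with hg
  have hgnorm : ∀ s, g s = ‖e s‖ ^ 2 := fun s => real_inner_self_eq_norm_sq _
  have hg0 : 0 ≤ g t₀ := (hgnorm t₀) ▸ sq_nonneg _
  -- derivative of the error
  have hde : ∀ s ≥ t₀, HasDerivAt e (f s (x s) - f s (q s)) s := fun s hs =>
    (hx s hs).sub (hq s (le_trans ht₀ hs))
  have hdg : ∀ s ≥ t₀, HasDerivAt g (2 * ⟪f s (x s) - f s (q s), e s⟫) s := by
    intro s hs
    have := HasDerivAt.inner ℝ (hde s hs) (hde s hs)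
    convert this using 1
    · rfl
    · rfl
    rw [real_inner_comm]
    ring
  have hgc : ContinuousOn g (Ici t₀) := fun s hs =>
    (hdg s hs).continuousAt.continuousWithinAt
  -- the key derivative estimate
  have key : ∀ s ≥ t₀, ‖e s‖ ≤ ρ →
      2 * ⟪f s (x s) - f s (q s), e s⟫ ≤ -k * g s + 0 := by
    intro s hs hes
    have hs0 : (0 : ℝ) ≤ s := le_trans ht₀ hs
    set A := fderiv ℝ (f s) (q s) with hA
    -- the Jacobian varies slowly on the small ball around `q s`
    have hball : ∀ z ∈ Metric.closedBall (q s) ‖e s‖, ‖fderiv ℝ (f s) z - A‖ ≤ M * ‖e s‖ := by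
      intro z hz
      rw [Metric.mem_closedBall, dist_eq_norm] at hz
      have hinr : ∀ w ∈ Metric.closedBall (q s) ρ, ‖fderiv ℝ (fderiv ℝ (f s)) w‖ ≤ M := by
        intro w hw
        rw [Metric.mem_closedBall, dist_eq_norm] at hw
        exact (hM s hs0 w ⟨s, hs0, lt_of_le_of_lt hw hρr⟩).2
      have hz' : z ∈ Metric.closedBall (q s) ρ := by
        rw [Metric.mem_closedBall, dist_eq_norm]; exact le_trans hz (le_trans hes le_rfl)
      have := Convex.norm_image_sub_le_of_norm_fderiv_le
        (f := fderiv ℝ (f s)) (C := M)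
        (fun w _ => (hFdiff s).differentiableAt) hinr (convex_closedBall _ _)
        (Metric.mem_closedBall_self hρpos.le) hz'
      exact le_trans this (mul_le_mul_of_nonneg_left hz hM0)
    -- Taylor remainder bound
    have hR : ‖f s (x s) - f s (q s) - A (e s)‖ ≤ M * ‖e s‖ * ‖e s‖ := by
      have := Convex.norm_image_sub_le_of_norm_fderiv_le' (f := f s) (φ := A)
        (C := M * ‖e s‖) (fun w _ => ((hf_diff s).differentiable (by norm_num)).differentiableAt)
        hball (convex_closedBall _ _)
        (Metric.mem_closedBall_self (norm_nonneg _))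
        (by rw [Metric.mem_closedBall, dist_eq_norm])
      exact this
    have h1 : ⟪A (e s), e s⟫ ≤ -k * ‖e s‖ ^ 2 := hcontr s hs0 (e s)
    have h2 : ⟪f s (x s) - f s (q s) - A (e s), e s⟫ ≤ M * ‖e s‖ * ‖e s‖ * ‖e s‖ :=
      le_trans (real_inner_le_norm _ _)
        (mul_le_mul_of_nonneg_right hR (norm_nonneg _))
    have hsplit : ⟪f s (x s) - f s (q s), e s⟫
        = ⟪A (e s), e s⟫ + ⟪f s (x s) - f s (q s) - A (e s), e s⟫ := by
      rw [← inner_add_left]; congr 1; abel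
    have hMe : M * ‖e s‖ ≤ k / 2 := le_trans (mul_le_mul_of_nonneg_left hes hM0) hρk
    have hcube : 2 * (M * ‖e s‖ * ‖e s‖ * ‖e s‖) ≤ k * ‖e s‖ ^ 2 := by
      have := mul_le_mul_of_nonneg_right hMe (sq_nonneg ‖e s‖)
      nlinarith [this]
    rw [hgnorm s]
    linarith [h1, h2, hsplit, hcube]
  -- continuous induction: the Grönwall estimate propagates
  have main : ∀ T ∈ Icc t₀ t, g T ≤ g t₀ * Real.exp (-k * (T - t₀)) := by
    intro T hT
    set S : Set ℝ := {T | g T ≤ g t₀ * Real.exp (-k * (T - t₀))} with hS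
    have hexpc : Continuous fun T : ℝ => Real.exp (-k * (T - t₀)) :=
      Real.continuous_exp.comp (continuous_const.mul (continuous_id.sub continuous_const))
    have hsub : Icc t₀ t ⊆ S := by
      apply IsClosed.Icc_subset_of_forall_exists_gt
      · have hcl : IsClosed (Icc t₀ t ∩
            (fun T => g T - g t₀ * Real.exp (-k * (T - t₀))) ⁻¹' Iic 0) := by
          apply ContinuousOn.preimage_isClosed_of_isClosed _ isClosed_Icc isClosed_Iic
          exact (hgc.mono Icc_subset_Ici_self).sub
            (continuousOn_const.mul hexpc.continuousOn)
        convert hcl using 1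
        ext z
        simp only [S, mem_inter_iff, mem_setOf_eq, mem_preimage, mem_Iic]
        constructor
        · rintro ⟨h1, h2⟩; exact ⟨h2, by linarith⟩
        · rintro ⟨h2, h1⟩; exact ⟨by linarith, h2⟩
      · show g t₀ ≤ g t₀ * Real.exp (-k * (t₀ - t₀))
        simp
      · rintro x₁ ⟨hx₁S, hx₁I⟩ y hy
        have hx₁0 : t₀ ≤ x₁ := hx₁I.1
        have hgt₀lt : g t₀ < ρ ^ 2 := by
          rw [hgnorm]
          have h := hx0
          nlinarith [norm_nonneg (e t₀), hρpos]
        have hexp1 : Real.exp (-k * (x₁ - t₀)) ≤ 1 := by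
          rw [Real.exp_le_one_iff]
          have : 0 ≤ k * (x₁ - t₀) := mul_nonneg hk.le (by linarith)
          linarith
        have hx₁S' : g x₁ ≤ g t₀ * Real.exp (-k * (x₁ - t₀)) := hx₁S
        have hgx₁ : g x₁ < ρ ^ 2 := by
          have hmul : g t₀ * Real.exp (-k * (x₁ - t₀)) ≤ g t₀ * 1 :=
            mul_le_mul_of_nonneg_left hexp1 hg0
          linarith
        -- find a small interval to the right where `g < ρ²`
        have hc : ContinuousWithinAt g (Ici x₁) x₁ :=
          (hgc x₁ hx₁0).mono (Ici_subset_Ici.2 hx₁0)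
        have hev : ∀ᶠ z in nhdsWithin x₁ (Ici x₁), g z < ρ ^ 2 :=
          hc.eventually (eventually_lt_nhds hgx₁)
        obtain ⟨b', hb', hIb⟩ := mem_nhdsGE_iff_exists_Icc_subset.1 hev
        set T' : ℝ := min (min y t) b' with hT'
        have hT'x₁ : x₁ < T' := lt_min (lt_min hy hx₁I.2) hb'
        have hT'b : T' ≤ b' := min_le_right _ _
        have hbound : ∀ z ∈ Icc x₁ T', ‖e z‖ ≤ ρ := by
          intro z hz
          have hzg : g z < ρ ^ 2 := hIb ⟨hz.1, le_trans hz.2 hT'b⟩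
          rw [hgnorm] at hzg
          nlinarith [norm_nonneg (e z), hρpos]
        -- Grönwall on `[x₁, T']`
        have hgron := le_gronwallBound_of_liminf_deriv_right_le
          (f := g) (f' := fun z => 2 * ⟪f z (x z) - f z (q z), e z⟫)
          (δ := g x₁) (K := -k) (ε := 0) (a := x₁) (b := T')
          (hgc.mono (fun z hz => le_trans hx₁0 hz.1))
          (fun z hz _r hr =>
            ((hdg z (le_trans hx₁0 hz.1)).hasDerivWithinAt.liminf_right_slope_le hr))
          le_rfl
          (fun z hz => key z (le_trans hx₁0 hz.1) (hbound z ⟨hz.1, hz.2.le⟩))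
        have hgT' : g T' ≤ g x₁ * Real.exp (-k * (T' - x₁)) := by
          have := hgron T' ⟨hT'x₁.le, le_rfl⟩
          rwa [gronwallBound_ε0] at this
        refine ⟨T', ?_, hT'x₁, le_trans (min_le_left _ _) (min_le_left _ _)⟩
        show g T' ≤ g t₀ * Real.exp (-k * (T' - t₀))
        calc g T' ≤ g x₁ * Real.exp (-k * (T' - x₁)) := hgT'
          _ ≤ g t₀ * Real.exp (-k * (x₁ - t₀)) * Real.exp (-k * (T' - x₁)) :=
              mul_le_mul_of_nonneg_right hx₁S' (Real.exp_pos _).le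
          _ = g t₀ * Real.exp (-k * (T' - t₀)) := by
              rw [mul_assoc, ← Real.exp_add]; ring_nf
    exact hsub hT
  -- conclude
  have hfinal : g t ≤ g t₀ * Real.exp (-k * (t - t₀)) := main t ⟨ht, le_rfl⟩
  have hrhs : (0:ℝ) ≤ ‖e t₀‖ * Real.exp (-(k / 2) * (t - t₀)) := by positivity
  have hsq : ‖e t‖ ^ 2 ≤ (‖e t₀‖ * Real.exp (-(k / 2) * (t - t₀))) ^ 2 := by
    have harg : -k * (t - t₀) = ((2:ℕ):ℝ) * (-(k / 2) * (t - t₀)) := by push_cast; ring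
    rw [mul_pow, ← Real.exp_nat_mul, ← harg, ← hgnorm t, ← hgnorm t₀]
    exact hfinal
  have hle := le_of_pow_le_pow_left₀ (n := 2) (by norm_num) hrhs hsq
  calc ‖x t - q t‖ = ‖e t‖ := rfl
    _ ≤ ‖e t₀‖ * Real.exp (-(k / 2) * (t - t₀)) := hle
    _ = 1 * ‖x t₀ - q t₀‖ * Real.exp (-(k / 2) * (t - t₀)) := by rw [one_mul]
end

section
/- Let R, R⋆ ∈ ℝ^{3×3} with RᵀR = I, R⋆ᵀR⋆ = I, det R = det R⋆ = 1 (i.e., R, R⋆ ∈ SO(3)), and let X ∈ ℝ^{3×3} be skew-symmetric (Xᵀ = −X). Then the second derivative at s = 0 of the map s ↦ ½ ‖R·exp(sX) − R⋆‖²_F equals tr(Xᵀ X R⋆ᵀ R) = −tr(R⋆ᵀ R X²). In particular, at R = R⋆ this second derivative equals tr(XᵀX) = ‖X‖²_F, which is strictly positive for X ≠ 0. -/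
/-!
For skew-symmetric `X` the geodesic factor `exp (s • X)` is orthogonal, so the cost along the
geodesic is `½ (‖R‖² + ‖R⋆‖²) - tr (R⋆ᵀ R exp (s • X))`: only the cross term moves. Its second
derivative at `0` is `-tr (R⋆ᵀ R X²)`, and `-X² = XᵀX` turns this into `tr (XᵀX R⋆ᵀ R)`.
-/

open scoped Matrix
open NormedSpace

namespace Matrix

variable {m n : Type*} [Fintype m] [Fintype n]

theorem trace_transpose_mul_self_pos {A : Matrix m n ℝ} (hA : A ≠ 0) : 0 < trace (Aᵀ * A) := by
  have h := (posSemidef_conjTranspose_mul_self A).trace_nonneg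
  have h0 := (trace_conjTranspose_mul_self_eq_zero_iff (A := A)).not.mpr hA
  rw [conjTranspose_eq_transpose_of_trivial] at h h0
  exact h.lt_of_ne' h0

variable [DecidableEq n]

theorem exp_smul_mul_transpose_of_transpose_eq_neg {X : Matrix n n ℝ} (hX : Xᵀ = -X) (s : ℝ) :
    exp (s • X) * (exp (s • X))ᵀ = 1 := by
  rw [← exp_transpose, transpose_smul, hX, smul_neg,
    ← exp_add_of_commute _ _ ((Commute.refl (s • X)).neg_right), add_neg_cancel, exp_zero]

theorem trace_transpose_mul_self_sub_mul {R : Type*} [CommRing R] (A E S : Matrix n n R)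
    (hE : E * Eᵀ = 1) :
    trace ((A * E - S)ᵀ * (A * E - S)) =
      trace (Aᵀ * A) + trace (Sᵀ * S) - 2 * trace (Sᵀ * A * E) := by
  have hAE : trace ((A * E)ᵀ * (A * E)) = trace (Aᵀ * A) := by
    rw [transpose_mul, trace_mul_comm, ← Matrix.mul_assoc, Matrix.mul_assoc A, hE, Matrix.mul_one,
      trace_mul_comm]
  have hcross : trace ((A * E)ᵀ * S) = trace (Sᵀ * A * E) := by
    rw [← trace_transpose, transpose_mul, transpose_transpose, Matrix.mul_assoc]
  simp only [transpose_sub, Matrix.sub_mul, Matrix.mul_sub, trace_sub, hAE, hcross]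
  rw [← Matrix.mul_assoc]
  ring

theorem hasDerivAt_trace_mul_exp_smul (M X : Matrix n n ℝ) (t : ℝ) :
    HasDerivAt (fun s : ℝ => trace (M * exp (s • X))) (trace (X * M * exp (t • X))) t := by
  let : NormedRing (Matrix n n ℝ) := Matrix.linftyOpNormedRing
  let : NormedAlgebra ℝ (Matrix n n ℝ) := Matrix.linftyOpNormedAlgebra
  have h := (hasDerivAt_exp_smul_const X t).const_mul M
  exact ((traceLinearMap n ℝ ℝ).toContinuousLinearMap.hasFDerivAt.comp_hasDerivAt t h).congr_deriv
    ((trace_mul_cycle' M _ X).trans (congrArg trace (Matrix.mul_assoc X M _).symm))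

theorem iteratedDeriv_two_trace_mul_exp_smul (M X : Matrix n n ℝ) :
    iteratedDeriv 2 (fun s : ℝ => trace (M * exp (s • X))) 0 = trace (X * X * M) := by
  have hderiv : deriv (fun s : ℝ => trace (M * exp (s • X))) =
      fun t => trace (X * M * exp (t • X)) :=
    funext fun t => (hasDerivAt_trace_mul_exp_smul M X t).deriv
  rw [iteratedDeriv_succ', iteratedDeriv_one, hderiv,
    (hasDerivAt_trace_mul_exp_smul (X * M) X 0).deriv, zero_smul, exp_zero, Matrix.mul_one,
    Matrix.mul_assoc]

end Matrix

theorem so3_hessian_of_frobenius_cost_general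
    (R Rstar X : Matrix (Fin 3) (Fin 3) ℝ)
    (hRstar : Rstarᵀ * Rstar = 1)
    (hX : Xᵀ = -X) :
    iteratedDeriv 2
      (fun s : ℝ =>
        (1 / 2 : ℝ) * Matrix.trace
          ((R * NormedSpace.exp (s • X) - Rstar)ᵀ *
            (R * NormedSpace.exp (s • X) - Rstar))) 0
      = Matrix.trace (Xᵀ * X * (Rstarᵀ * R))
    ∧
    Matrix.trace (Xᵀ * X * (Rstarᵀ * R)) = -Matrix.trace (Rstarᵀ * R * (X * X))
    ∧
    (R = Rstar →
      Matrix.trace (Xᵀ * X * (Rstarᵀ * R)) = Matrix.trace (Xᵀ * X) ∧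
      (X ≠ 0 → 0 < Matrix.trace (Xᵀ * X))) := by
  have hcost : (fun s : ℝ => (1 / 2 : ℝ) * Matrix.trace
        ((R * exp (s • X) - Rstar)ᵀ * (R * exp (s • X) - Rstar))) =
      fun s => (Matrix.trace (Rᵀ * R) + Matrix.trace (Rstarᵀ * Rstar)) / 2 -
        Matrix.trace (Rstarᵀ * R * exp (s • X)) := by
    funext s
    rw [Matrix.trace_transpose_mul_self_sub_mul _ _ _
      (Matrix.exp_smul_mul_transpose_of_transpose_eq_neg hX s)]
    ring
  have hskew : Matrix.trace (Xᵀ * X * (Rstarᵀ * R)) = -Matrix.trace (X * X * (Rstarᵀ * R)) := by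
    rw [hX, Matrix.neg_mul, Matrix.neg_mul, Matrix.trace_neg]
  refine ⟨?_, ?_, ?_⟩
  · rw [hcost, iteratedDeriv_const_sub two_pos, iteratedDeriv_neg,
      Matrix.iteratedDeriv_two_trace_mul_exp_smul, hskew]
  · rw [hskew, Matrix.trace_mul_comm]
  · rintro rfl
    rw [hRstar, Matrix.mul_one]
    exact ⟨rfl, Matrix.trace_transpose_mul_self_pos⟩

/-- Hessian of `F(R) = ½‖R - R⋆‖²_F` on `SO(3)` along geodesics:
for `R, R⋆ ∈ SO(3)` and skew-symmetric `X`, the second derivative at `s = 0` of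
`s ↦ ½‖R exp(sX) - R⋆‖²_F` equals `tr(Xᵀ X R⋆ᵀ R) = -tr(R⋆ᵀ R X²)`; at `R = R⋆` it
equals `tr(Xᵀ X) = ‖X‖²_F > 0` for `X ≠ 0`. -/
theorem so3_hessian_of_frobenius_cost
    (R Rstar X : Matrix (Fin 3) (Fin 3) ℝ)
    (hR : Rᵀ * R = 1) (hRstar : Rstarᵀ * Rstar = 1)
    (hdetR : R.det = 1) (hdetRstar : Rstar.det = 1)
    (hX : Xᵀ = -X) :
    iteratedDeriv 2
      (fun s : ℝ =>
        (1 / 2 : ℝ) * Matrix.trace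
          ((R * NormedSpace.exp (s • X) - Rstar)ᵀ *
            (R * NormedSpace.exp (s • X) - Rstar))) 0
      = Matrix.trace (Xᵀ * X * (Rstarᵀ * R))
    ∧
    Matrix.trace (Xᵀ * X * (Rstarᵀ * R)) = -Matrix.trace (Rstarᵀ * R * (X * X))
    ∧
    (R = Rstar →
      Matrix.trace (Xᵀ * X * (Rstarᵀ * R)) = Matrix.trace (Xᵀ * X) ∧
      (X ≠ 0 → 0 < Matrix.trace (Xᵀ * X))) :=
  so3_hessian_of_frobenius_cost_general R Rstar X hRstar hX
end
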